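/- arXiv:1806.02625 — 2 statements merged into one kernel-verified Lean document; each statement's English description precedes it below -/
import Mathlib

section
/- Let r, t be positive integers and let G be a finite simple graph whose adjacency spectrum is the multiset {−t, t, 0 (with multiplicity 2t + r − 2)}, i.e., whose adjacency characteristic polynomial is x^(2t + r − 2) · (x − t)(x + t). Then G is connected if and only if G is isomorphic to a complete bipartite graph K_{p,q}, where p and q are positive integers satisfying p + q = r + 2t and pq = t² (i.e., p and q are the two roots of x² − (r + 2t)x + t² = 0). -/
/-!
The eigenvalues `t, -t, 0, …, 0` make the adjacency matrix `A` of rank two. If `G` is connected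
and `uv` is an edge, the rows of `u` and `v` are independent, so they span every row of `A`;
comparing entries, each row is `[w ~ v] A_u + [w ~ u] A_v`, and the zero diagonal together with
connectivity forces every vertex to be adjacent to exactly one of `u`, `v` and to share the
neighbourhood of the other. Hence `G ≅ K_{p,q}` with parts `N(u)`, `N(v)`. Counting vertices gives
`p + q = r + 2t`, and `tr A² = 2|E| = 2pq` equals the sum `2t²` of the squared eigenvalues.
-/

open SimpleGraph Polynomial

/-- The multicone graph `K_r ∇ sK_t`: the join of the complete graph on `r` vertices
with `s` disjoint copies of the complete graph on `t` vertices. -/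
def multicone (r s t : ℕ) : SimpleGraph (Fin r ⊕ Fin s × Fin t) where
  Adj v w := v ≠ w ∧ ∀ i a j b, v = Sum.inr (i, a) → w = Sum.inr (j, b) → i = j
  symm := by
    constructor
    rintro v w ⟨hne, h⟩
    exact ⟨hne.symm, fun i a j b hv hw => (h j b i a hw hv).symm⟩
  loopless := ⟨fun v h => h.1 rfl⟩

noncomputable instance (r s t : ℕ) : DecidableRel (multicone r s t).Adj :=
  Classical.decRel _

noncomputable instance (r s t : ℕ) : DecidableRel ((multicone r s t)ᶜ).Adj :=
  Classical.decRel _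

open Matrix Finset

theorem Polynomial.roots_X_pow_mul_X_sub_C_mul_X_add_C {R : Type*} [CommRing R] [IsDomain R]
    (m : ℕ) (s : R) :
    (X ^ m * (X - C s) * (X + C s)).roots = s ::ₘ -s ::ₘ Multiset.replicate m 0 := by
  have hne : (X ^ m * (X - C s) * (X - C (-s)) : R[X]) ≠ 0 :=
    mul_ne_zero (mul_ne_zero (pow_ne_zero _ X_ne_zero) (X_sub_C_ne_zero s)) (X_sub_C_ne_zero _)
  rw [← sub_neg_eq_add, ← C_neg, roots_mul hne, roots_mul (left_ne_zero_of_mul hne),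
    roots_X_pow, roots_X_sub_C, roots_X_sub_C, Multiset.nsmul_singleton]
  simp only [← Multiset.singleton_add]
  abel

namespace Matrix

theorem span_range_eq_span_row_of_linearIndependent {m n K ι : Type*} [Field K] [Finite m]
    [Fintype n] [Fintype ι] {A : Matrix m n K} {b : ι → n → K} (hb : LinearIndependent K b)
    (hrow : Set.range b ⊆ Set.range A.row) (hcard : A.rank = Fintype.card ι) :
    Submodule.span K (Set.range b) = Submodule.span K (Set.range A.row) :=
  Submodule.eq_of_le_of_finrank_le (Submodule.span_mono hrow) <| by
    rw [← rank_eq_finrank_span_row, hcard, finrank_span_eq_card hb]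

theorem card_eq_of_charpoly_eq {R n : Type*} [CommRing R] [IsDomain R] [Fintype n]
    [DecidableEq n] {A : Matrix n n R} {m : ℕ} {s : R}
    (h : A.charpoly = X ^ m * (X - C s) * (X + C s)) : Fintype.card n = m + 2 := by
  rw [← A.charpoly_natDegree_eq_dim, h, natDegree_mul, natDegree_mul, natDegree_X_pow,
    natDegree_X_sub_C, natDegree_X_add_C]
  all_goals simp [X_sub_C_ne_zero, X_add_C_ne_zero]

namespace IsHermitian

variable {𝕜 n : Type*} [RCLike 𝕜] [Fintype n] [DecidableEq n] {A : Matrix n n 𝕜}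

theorem rank_eq_card_filter_roots_charpoly (hA : A.IsHermitian) :
    A.rank = (A.charpoly.roots.filter (· ≠ 0)).card := by
  rw [hA.rank_eq_card_non_zero_eigs, hA.roots_charpoly_eq_eigenvalues, Multiset.filter_map,
    Multiset.card_map, Fintype.card_subtype]
  simp only [Function.comp_apply, ne_eq, RCLike.ofReal_eq_zero]
  rfl

theorem trace_sq_eq_sum_sq_roots_charpoly (hA : A.IsHermitian) :
    (A ^ 2).trace = (A.charpoly.roots.map (· ^ 2)).sum := by
  have hroots : (A ^ 2).charpoly.roots = A.charpoly.roots.map (· ^ 2) := by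
    rw [← cfc_pow_id (R := ℝ) A 2 hA.isSelfAdjoint, hA.charpoly_cfc_eq,
      roots_prod _ _ (prod_ne_zero_iff.2 fun i _ => X_sub_C_ne_zero _),
      hA.roots_charpoly_eq_eigenvalues]
    simp only [roots_X_sub_C, Multiset.bind_singleton, Multiset.map_map]
    simp
  rw [trace_eq_sum_roots_charpoly_of_splits (hA.pow 2).splits_charpoly, hroots]

variable {m : ℕ} {s : 𝕜}

theorem rank_eq_two_of_charpoly_eq (hA : A.IsHermitian) (hs : s ≠ 0)
    (h : A.charpoly = X ^ m * (X - C s) * (X + C s)) : A.rank = 2 := by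
  rw [hA.rank_eq_card_filter_roots_charpoly, h, roots_X_pow_mul_X_sub_C_mul_X_add_C]
  simp [hs, Multiset.mem_replicate]

theorem trace_sq_of_charpoly_eq (hA : A.IsHermitian)
    (h : A.charpoly = X ^ m * (X - C s) * (X + C s)) : (A ^ 2).trace = 2 * s ^ 2 := by
  rw [hA.trace_sq_eq_sum_sq_roots_charpoly, h, roots_X_pow_mul_X_sub_C_mul_X_add_C]
  simp only [Multiset.map_cons, Multiset.map_replicate, Multiset.sum_cons, Multiset.sum_replicate,
    neg_sq, zero_pow two_ne_zero, nsmul_zero]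
  ring

end IsHermitian

end Matrix

namespace SimpleGraph

theorem completeBipartiteGraph_connected {α β : Type*} [Nonempty α] [Nonempty β] :
    (completeBipartiteGraph α β).Connected := by
  obtain ⟨a⟩ := ‹Nonempty α›
  obtain ⟨b⟩ := ‹Nonempty β›
  have hb : (completeBipartiteGraph α β).Reachable (.inl a) (.inr b) := Adj.reachable (by simp)
  refine (connected_iff_exists_forall_reachable _).2 ⟨.inl a, ?_⟩
  rintro (a' | b')
  · exact hb.trans (Adj.reachable (by simp))
  · exact Adj.reachable (by simp)

theorem card_edgeFinset_completeBipartiteGraph {α β : Type*} [Fintype α] [Fintype β]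
    [Fintype (completeBipartiteGraph α β).edgeSet] :
    #(completeBipartiteGraph α β).edgeFinset = Fintype.card α * Fintype.card β := by
  have := encard_edgeSet_completeBipartiteGraph (W₁ := α) (W₂ := β)
  rw [← coe_edgeFinset, Set.encard_coe_eq_coe_finsetCard] at this
  simp only [ENat.card_eq_coe_fintype_card] at this
  exact_mod_cast this

variable {V : Type*}

theorem nonempty_iso_completeBipartiteGraph_of_adj_iff {G : SimpleGraph V} (P : V → Prop)
    [DecidablePred P] (h : ∀ w w', G.Adj w w' ↔ (P w ↔ ¬ P w')) :
    Nonempty (G ≃g completeBipartiteGraph {w // P w} {w // ¬ P w}) :=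
  ⟨⟨(Equiv.sumCompl P).symm, fun {a b} => by
    rw [h]; by_cases ha : P a <;> by_cases hb : P b <;> simp [ha, hb]⟩⟩

theorem trace_adjMatrix_sq [Fintype V] [DecidableEq V] (G : SimpleGraph V) [DecidableRel G.Adj]
    {R : Type*} [Semiring R] : (G.adjMatrix R ^ 2).trace = 2 * (#G.edgeFinset : R) := by
  simp only [sq, trace, Matrix.diag, adjMatrix_mul_self_apply_self]
  rw [← Nat.cast_sum, G.sum_degrees_eq_twice_card_edges, Nat.cast_mul, Nat.cast_ofNat]

variable {K : Type*} [Field K] {G : SimpleGraph V} [DecidableRel G.Adj] {u v w : V}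

theorem adj_iff_adj_of_adjMatrix_eq {w₁ w₂ : V} (h : G.adjMatrix K w₁ = G.adjMatrix K w₂)
    (x : V) : G.Adj w₁ x ↔ G.Adj w₂ x := by
  have := congr_fun h x
  by_cases h₁ : G.Adj w₁ x <;> by_cases h₂ : G.Adj w₂ x <;> simp_all

theorem linearIndependent_adjMatrix_pair (huv : G.Adj u v) :
    LinearIndependent K ![G.adjMatrix K u, G.adjMatrix K v] := by
  refine LinearIndependent.pair_iff.2 fun a b hab => ⟨?_, ?_⟩
  · simpa [huv] using congr_fun hab v
  · simpa [huv.symm] using congr_fun hab u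

theorem adjMatrix_eq_of_mem_span_pair (huv : G.Adj u v)
    (hw : G.adjMatrix K w ∈ Submodule.span K {G.adjMatrix K u, G.adjMatrix K v}) :
    G.adjMatrix K w =
      G.adjMatrix K w v • G.adjMatrix K u + G.adjMatrix K w u • G.adjMatrix K v := by
  obtain ⟨a, b, hab⟩ := Submodule.mem_span_pair.1 hw
  have ha : a = G.adjMatrix K w v := by simpa [huv] using congr_fun hab v
  have hb : b = G.adjMatrix K w u := by simpa [huv.symm] using congr_fun hab u
  rw [← ha, ← hb, hab]

theorem adj_iff_not_adj_of_mem_span_pair [CharZero K] (hG : G.Preconnected) (huv : G.Adj u v)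
    (hw : G.adjMatrix K w ∈ Submodule.span K {G.adjMatrix K u, G.adjMatrix K v}) :
    G.Adj w v ↔ ¬ G.Adj w u := by
  have hrow := adjMatrix_eq_of_mem_span_pair huv hw
  by_cases hwu : G.Adj w u
  · -- the zero diagonal entry of `w` is `2 [w ~ u] [w ~ v]`
    have hdiag := congr_fun hrow w
    simp only [Pi.add_apply, Pi.smul_apply, smul_eq_mul, adjMatrix_apply, G.adj_comm u w,
      G.adj_comm v w, hwu, G.loopless.irrefl, if_true, if_false] at hdiag
    refine iff_of_false (fun hwv => ?_) (not_not.2 hwu)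
    norm_num [hwv] at hdiag
  · refine iff_of_true (by_contra fun hwv => ?_) hwu
    obtain ⟨x, hx⟩ := (hG w u).nonempty_neighborSet_left (by rintro rfl; exact hwv huv)
    have hwx : ¬ G.Adj w x := by simpa [hwu, hwv] using congr_fun hrow x
    exact hwx hx

theorem adj_iff_of_forall_mem_span_pair [CharZero K] (hG : G.Preconnected) (huv : G.Adj u v)
    (hspan : ∀ w, G.adjMatrix K w ∈ Submodule.span K {G.adjMatrix K u, G.adjMatrix K v})
    (w w' : V) : G.Adj w w' ↔ (G.Adj w u ↔ ¬ G.Adj w' u) := by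
  have hv x : G.Adj x v ↔ ¬ G.Adj x u := adj_iff_not_adj_of_mem_span_pair hG huv (hspan x)
  have hrow := adjMatrix_eq_of_mem_span_pair huv (hspan w)
  by_cases hwu : G.Adj w u
  · have hwv : G.adjMatrix K w = G.adjMatrix K v := by simpa [hwu, hv w] using hrow
    rw [adj_iff_adj_of_adjMatrix_eq hwv, G.adj_comm, hv]
    simp [hwu]
  · have hwu' : G.adjMatrix K w = G.adjMatrix K u := by simpa [hwu, hv w] using hrow
    rw [adj_iff_adj_of_adjMatrix_eq hwu', G.adj_comm]
    simp [hwu]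

theorem Connected.exists_iso_completeBipartiteGraph_of_rank_adjMatrix_eq_two [Fintype V]
    [CharZero K] (hG : G.Connected) (hrank : (G.adjMatrix K).rank = 2) :
    ∃ p q : ℕ, Nonempty (G ≃g completeBipartiteGraph (Fin p) (Fin q)) := by
  classical
  obtain ⟨u, v, huv⟩ : ∃ u v, G.Adj u v := by
    by_contra! h
    have : G.adjMatrix K = 0 := by ext; simp [adjMatrix_apply, h]
    simp [this] at hrank
  have hspan w : G.adjMatrix K w ∈ Submodule.span K {G.adjMatrix K u, G.adjMatrix K v} := by
    have hrows :
        Set.range ![G.adjMatrix K u, G.adjMatrix K v] ⊆ Set.range (G.adjMatrix K).row := by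
      rw [range_cons_cons_empty]
      rintro _ (rfl | rfl) <;> exact ⟨_, rfl⟩
    have heq := span_range_eq_span_row_of_linearIndependent (linearIndependent_adjMatrix_pair huv)
      hrows (by rw [hrank, Fintype.card_fin])
    rw [range_cons_cons_empty] at heq
    exact heq ▸ Submodule.subset_span ⟨w, rfl⟩
  obtain ⟨e⟩ := nonempty_iso_completeBipartiteGraph_of_adj_iff _
    (adj_iff_of_forall_mem_span_pair hG.preconnected huv hspan)
  exact ⟨_, _,
    ⟨e.trans (completeBipartiteGraphCongr (Fintype.equivFin _) (Fintype.equivFin _))⟩⟩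

end SimpleGraph

theorem connected_iff_completeBipartite_general {V : Type} [Fintype V] [DecidableEq V]
    (r t : ℕ) (ht : 1 ≤ t)
    (G : SimpleGraph V) [DecidableRel G.Adj]
    (hspec : (G.adjMatrix ℝ).charpoly =
      X ^ (2 * t + r - 2) * (X - C (t : ℝ)) * (X + C (t : ℝ))) :
    G.Connected ↔ ∃ p q : ℕ, 0 < p ∧ 0 < q ∧ p + q = r + 2 * t ∧ p * q = t ^ 2 ∧
      Nonempty (G ≃g completeBipartiteGraph (Fin p) (Fin q)) := by
  have hA := G.isHermitian_adjMatrix ℝ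
  constructor
  · intro hconn
    have ht0 : (t : ℝ) ≠ 0 := by positivity
    obtain ⟨p, q, ⟨e⟩⟩ := hconn.exists_iso_completeBipartiteGraph_of_rank_adjMatrix_eq_two
      (hA.rank_eq_two_of_charpoly_eq ht0 hspec)
    have hcard : p + q = r + 2 * t := by
      have hV := card_eq_of_charpoly_eq hspec
      rw [Fintype.card_congr e.toEquiv, Fintype.card_sum, Fintype.card_fin, Fintype.card_fin] at hV
      omega
    have hpq : p * q = t ^ 2 := by
      classical
      have htr := hA.trace_sq_of_charpoly_eq hspec
      rw [trace_adjMatrix_sq, e.card_edgeFinset_eq, card_edgeFinset_completeBipartiteGraph,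
        Fintype.card_fin, Fintype.card_fin] at htr
      exact_mod_cast mul_left_cancel₀ two_ne_zero htr
    have hpq0 : 0 < p * q := hpq ▸ by positivity
    exact ⟨p, q, Nat.pos_of_mul_pos_right hpq0, Nat.pos_of_mul_pos_left hpq0, hcard, hpq,
      ⟨e⟩⟩
  · rintro ⟨p, q, hp, hq, -, -, ⟨e⟩⟩
    have : Nonempty (Fin p) := ⟨⟨0, hp⟩⟩
    have : Nonempty (Fin q) := ⟨⟨0, hq⟩⟩
    exact e.connected_iff.2 completeBipartiteGraph_connected

/-- If `G` has adjacency characteristic polynomial `x^(2t+r-2) · (x - t)(x + t)`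
(i.e., adjacency spectrum `{-t, t, 0^(2t+r-2)}`), then `G` is connected if and only if
`G` is isomorphic to a complete bipartite graph `K_{p,q}` where `p` and `q` are the two
roots of `x² - (r + 2t)x + t² = 0`. -/
theorem connected_iff_completeBipartite {V : Type} [Fintype V] [DecidableEq V]
    (r t : ℕ) (hr : 1 ≤ r) (ht : 1 ≤ t)
    (G : SimpleGraph V) [DecidableRel G.Adj]
    (hspec : (G.adjMatrix ℝ).charpoly =
      X ^ (2 * t + r - 2) * (X - C (t : ℝ)) * (X + C (t : ℝ))) :
    G.Connected ↔ ∃ p q : ℕ, 0 < p ∧ 0 < q ∧ p + q = r + 2 * t ∧ p * q = t ^ 2 ∧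
      Nonempty (G ≃g completeBipartiteGraph (Fin p) (Fin q)) :=
  connected_iff_completeBipartite_general r t ht G hspec
end

section
/- Let r, s, t be positive integers. The Laplacian spectrum of the multicone graph K_r ∇ sK_t is the multiset {r + st with multiplicity r, r + t with multiplicity s(t − 1), r with multiplicity s − 1, 0 with multiplicity 1}; equivalently the characteristic polynomial of its Laplacian matrix is x · (x − r)^(s − 1) · (x − (r + t))^(s(t − 1)) · (x − (r + st))^r. -/
/-!
It suffices to compare both sides at every `x ∉ {r, r + t, r + st}`. Ordering the vertices as
`R ⊕ (T₁ ∪ ⋯ ∪ Tₛ)` and writing `J` for an all-ones matrix, `xI - L` is the block matrix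
`[[(x - r - st) I + J, J], [J, I_s ⊗ ((x - r - t) I + J)]]`. Its lower right block has constant
row sums `x - r` and determinant `((x - r - t)^(t - 1) (x - r))^s`, so its Schur complement is
`(x - r - st) I + (1 - st / (x - r)) J`, of determinant `x (x - r - st)^r / (x - r)` by the matrix
determinant lemma.
-/

open SimpleGraph Polynomial

open Matrix
open scoped Kronecker

namespace Matrix
variable {m n K : Type*} [Fintype m] [Fintype n] [DecidableEq m] [Field K]

theorem det_smul_one_add_const [DecidableEq n] (a b : K) (ha : a ≠ 0) :
    (a • (1 : Matrix n n K) + of fun _ _ => b).det =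
      a ^ Fintype.card n * (1 + Fintype.card n * b / a) := by
  have h : (a • (1 : Matrix n n K) + of fun _ _ => b) = a • ((1 : Matrix n n K) +
      replicateCol Unit (fun _ : n => b / a) * replicateRow Unit (fun _ : n => (1 : K))) := by
    ext i j
    simp [one_apply, mul_add, mul_apply, mul_div_cancel₀ _ ha]
  rw [h, det_smul, det_one_add_replicateCol_mul_replicateRow]
  simp [dotProduct, mul_div_assoc]

theorem smul_one_add_const_mulVec_one [DecidableEq n] (a b : K) :
    (a • (1 : Matrix n n K) + of fun _ _ => b) *ᵥ 1 = (a + Fintype.card n * b) • 1 := by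
  ext i
  simp [mulVec, dotProduct, one_apply, Finset.sum_add_distrib]

theorem one_kronecker_mulVec_one {E : Matrix n n K} {c : K} (hE : E *ᵥ 1 = c • 1) :
    ((1 : Matrix m m K) ⊗ₖ E) *ᵥ 1 = c • 1 := by
  ext ⟨i, a⟩
  have := congrFun hE a
  simp_all [mulVec, dotProduct, Fintype.sum_prod_type, one_apply]

theorem det_fromBlocks_ones_ones [DecidableEq n] (A : Matrix m m K) (D : Matrix n n K)
    (hD : IsUnit D.det) {c : K} (hc : c ≠ 0) (hDc : D *ᵥ 1 = c • 1) :
    (fromBlocks A (of fun _ _ => 1) (of fun _ _ => 1) D).det =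
      D.det * (A - of fun _ _ => Fintype.card n / c).det := by
  let := D.invertibleOfIsUnitDet hD
  have hrow (k : n) : ∑ l, D⁻¹ k l = c⁻¹ := by
    have hinv : D⁻¹ *ᵥ 1 = c⁻¹ • 1 := by
      rw [← inv_smul_smul₀ hc (D⁻¹ *ᵥ 1), ← mulVec_smul, ← hDc, mulVec_mulVec,
        nonsing_inv_mul _ hD, one_mulVec]
    simpa [mulVec, dotProduct] using congrFun hinv k
  rw [det_fromBlocks₂₂, invOf_eq_nonsing_inv]
  congr 2
  ext i j
  simp [mul_apply, Finset.sum_comm (γ := n), hrow, div_eq_mul_inv]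

end Matrix

section Multicone

variable {r s t : ℕ}

@[simp] lemma multicone_adj_inl_inl {a b : Fin r} :
    (multicone r s t).Adj (.inl a) (.inl b) ↔ a ≠ b := by
  simp [multicone]

@[simp] lemma multicone_adj_inl_inr (a : Fin r) (p : Fin s × Fin t) :
    (multicone r s t).Adj (.inl a) (.inr p) := by
  simp [multicone]

@[simp] lemma multicone_adj_inr_inl (p : Fin s × Fin t) (a : Fin r) :
    (multicone r s t).Adj (.inr p) (.inl a) := by
  simp [multicone]

@[simp] lemma multicone_adj_inr_inr {p q : Fin s × Fin t} :
    (multicone r s t).Adj (.inr p) (.inr q) ↔ p ≠ q ∧ p.1 = q.1 :=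
  ⟨fun h => ⟨fun e => h.1 (congrArg _ e), h.2 _ _ _ _ rfl rfl⟩,
    fun ⟨hne, h⟩ => ⟨by simpa using hne, by rintro i a j b ⟨⟩ ⟨⟩; exact h⟩⟩

lemma multicone_degree_inl (a : Fin r) :
    ((multicone r s t).degree (.inl a) : ℝ) = r + s * t - 1 := by
  have h (b : Fin r) : (if a ≠ b then (1 : ℝ) else 0) = 1 - if a = b then 1 else 0 := by
    by_cases hab : a = b <;> simp [hab]
  rw [degree_eq_sum_if_adj, Fintype.sum_sum_type]
  simp [h, Finset.sum_sub_distrib, sub_add_eq_add_sub]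

lemma multicone_degree_inr (p : Fin s × Fin t) :
    ((multicone r s t).degree (.inr p) : ℝ) = r + t - 1 := by
  have h (q : Fin s × Fin t) : (if p ≠ q ∧ p.1 = q.1 then (1 : ℝ) else 0) =
      (if p.1 = q.1 then 1 else 0) - if p = q then 1 else 0 := by
    by_cases hpq : p = q <;> simp [hpq]
  have hblock : ∑ q : Fin s × Fin t, (if p.1 = q.1 then (1 : ℝ) else 0) = t := by
    rw [Fintype.sum_prod_type, Fintype.sum_eq_single p.1 (fun i hi => by simp [Ne.symm hi])]
    simp
  rw [degree_eq_sum_if_adj, Fintype.sum_sum_type]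
  simp [h, Finset.sum_sub_distrib, hblock, add_sub_assoc]

theorem multicone_lapMatrix : (multicone r s t).lapMatrix ℝ =
    fromBlocks (((r : ℝ) + s * t) • 1 - of fun _ _ => 1) (-of fun _ _ => 1) (-of fun _ _ => 1)
      (1 ⊗ₖ (((r : ℝ) + t) • 1 - of fun _ _ => 1)) := by
  ext (a | ⟨i, a⟩) (b | ⟨j, b⟩)
  · by_cases hab : a = b
    · subst hab; simp [lapMatrix, degMatrix, multicone_degree_inl]
    · simp [lapMatrix, degMatrix, hab]
  · simp [lapMatrix, degMatrix]
  · simp [lapMatrix, degMatrix]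
  · by_cases hij : i = j <;> by_cases hab : a = b
    · subst hij hab; simp [lapMatrix, degMatrix, multicone_degree_inr]
    all_goals simp [lapMatrix, degMatrix, hij, hab]

theorem scalar_sub_multicone_lapMatrix (x : ℝ) :
    scalar _ x - (multicone r s t).lapMatrix ℝ =
      fromBlocks ((x - (r + s * t)) • 1 + of fun _ _ => 1) (of fun _ _ => 1) (of fun _ _ => 1)
        (1 ⊗ₖ ((x - (r + t)) • 1 + of fun _ _ => 1)) := by
  rw [multicone_lapMatrix]
  ext (a | ⟨i, a⟩) (b | ⟨j, b⟩) <;> simp [one_apply, diagonal_apply] <;> grind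

theorem det_scalar_sub_multicone_lapMatrix (hs : 1 ≤ s) (ht : 1 ≤ t) {x : ℝ}
    (hc : x - r ≠ 0) (hα : x - (r + t) ≠ 0) (hν : x - (r + s * t) ≠ 0) :
    (scalar _ x - (multicone r s t).lapMatrix ℝ).det =
      x * (x - r) ^ (s - 1) * (x - (r + t)) ^ (s * (t - 1)) * (x - (r + s * t)) ^ r := by
  let E : Matrix (Fin t) (Fin t) ℝ := (x - (r + t)) • 1 + of fun _ _ => 1
  have hdetE : E.det = (x - (r + t)) ^ (t - 1) * (x - r) := by
    rw [det_smul_one_add_const _ _ hα, Fintype.card_fin]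
    obtain ⟨t, rfl⟩ := Nat.exists_eq_add_of_le' ht
    field_simp
    push_cast
    ring
  have hrowE : E *ᵥ 1 = (x - r) • 1 := by
    rw [smul_one_add_const_mulVec_one, Fintype.card_fin]
    congr 1
    ring
  have hdetD : ((1 : Matrix (Fin s) (Fin s) ℝ) ⊗ₖ E).det = E.det ^ s := by
    simp [det_kronecker]
  have hunit : IsUnit ((1 : Matrix (Fin s) (Fin s) ℝ) ⊗ₖ E).det := by
    rw [hdetD, hdetE, isUnit_iff_ne_zero]
    exact pow_ne_zero _ (mul_ne_zero (pow_ne_zero _ hα) hc)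
  have hschur : ((x - (r + s * t)) • (1 : Matrix (Fin r) (Fin r) ℝ) + of fun _ _ => 1) -
      (of fun _ _ => (Fintype.card (Fin s × Fin t) : ℝ) / (x - r)) =
      (x - (r + s * t)) • 1 + of fun _ _ => 1 - s * t / (x - r) := by
    ext i j
    simp [sub_eq_add_neg, add_assoc]
  have hdetR : ((x - (r + s * t)) • (1 : Matrix (Fin r) (Fin r) ℝ) +
      of fun _ _ => 1 - s * t / (x - r)).det = x * (x - (r + s * t)) ^ r / (x - r) := by
    rw [det_smul_one_add_const _ _ hν, Fintype.card_fin]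
    field_simp
    ring
  rw [scalar_sub_multicone_lapMatrix, det_fromBlocks_ones_ones _ _ hunit hc
    (one_kronecker_mulVec_one hrowE), hdetD, hdetE, hschur, hdetR]
  obtain ⟨s, rfl⟩ := Nat.exists_eq_add_of_le' hs
  rw [add_tsub_cancel_right, mul_pow, ← pow_mul, pow_succ (x - r)]
  field_simp
  ring

end Multicone

theorem multicone_lap_charpoly_general (r s t : ℕ) (hs : 1 ≤ s) (ht : 1 ≤ t) :
    ((multicone r s t).lapMatrix ℝ).charpoly =
      X * (X - C (r : ℝ)) ^ (s - 1) * (X - C ((r : ℝ) + (t : ℝ))) ^ (s * (t - 1)) *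
        (X - C ((r : ℝ) + (s : ℝ) * (t : ℝ))) ^ r := by
  have hcofinite : ({(r : ℝ), (r : ℝ) + t, (r : ℝ) + s * t} : Set ℝ)ᶜ.Infinite :=
    (Set.toFinite _).infinite_compl
  refine eq_of_infinite_eval_eq _ _ (hcofinite.mono fun x hx => ?_)
  simp only [Set.mem_compl_iff, Set.mem_insert_iff, Set.mem_singleton_iff, not_or] at hx
  obtain ⟨hc, hα, hν⟩ := hx
  rw [Set.mem_ofPred_eq, eval_charpoly, det_scalar_sub_multicone_lapMatrix hs ht
    (sub_ne_zero.2 hc) (sub_ne_zero.2 hα) (sub_ne_zero.2 hν)]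
  simp

/-- The Laplacian characteristic polynomial of the multicone graph `K_r ∇ sK_t` is
`x · (x - r)^(s-1) · (x - (r+t))^(s(t-1)) · (x - (r+st))^r`; equivalently its Laplacian
spectrum is `{(r+st)^r, (r+t)^(s(t-1)), r^(s-1), 0^1}`. -/
theorem multicone_lap_charpoly (r s t : ℕ) (hr : 1 ≤ r) (hs : 1 ≤ s) (ht : 1 ≤ t) :
    ((multicone r s t).lapMatrix ℝ).charpoly =
      X * (X - C (r : ℝ)) ^ (s - 1) * (X - C ((r : ℝ) + (t : ℝ))) ^ (s * (t - 1)) *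
        (X - C ((r : ℝ) + (s : ℝ) * (t : ℝ))) ^ r :=
  multicone_lap_charpoly_general r s t hs ht
end
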